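/- Let X, Y, Z, M₁₂, M₂₃, M₃₁ be finite-valued random variables satisfying: (i) H(X|M₁₂,M₃₁) = H(Y|M₁₂,M₂₃) = H(Z|M₂₃,M₃₁) = 0; (ii) I(M₁₂,M₃₁; Y,Z | X) = 0, I(M₁₂,M₂₃; X,Z | Y) = 0, I(M₂₃,M₃₁; X,Y | Z) = 0; and (iii) I(M₁₂; M₂₃) ≥ I(M₁₂; M₂₃ | M₃₁). Then H(M₂₃) ≥ RI(X;Z) + RI(X;Y) + H(Y, Z | X), where RI(A;B) := inf { I(A;B | Q) : Q = f(A) = g(B) almost surely for some functions f, g }. -/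

import Mathlib

open scoped BigOperators

noncomputable section

/-- Probability that the random variable `X` takes the value `a`,
with respect to the probability mass function `p` on the finite sample space `Ω`. -/
def prob {Ω : Type*} [Fintype Ω] {α : Type*} [DecidableEq α]
    (p : Ω → ℝ) (X : Ω → α) (a : α) : ℝ :=
  ∑ ω, if X ω = a then p ω else 0

/-- Shannon entropy (base 2) of the random variable `X`. -/
def ent {Ω : Type*} [Fintype Ω] {α : Type*} [Fintype α] [DecidableEq α]
    (p : Ω → ℝ) (X : Ω → α) : ℝ :=
  -∑ a, prob p X a * Real.logb 2 (prob p X a)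

/-- Conditional entropy `H(X|Y)`. -/
def condEnt {Ω : Type*} [Fintype Ω] {α β : Type*} [Fintype α] [DecidableEq α]
    [Fintype β] [DecidableEq β] (p : Ω → ℝ) (X : Ω → α) (Y : Ω → β) : ℝ :=
  ent p (fun ω => (X ω, Y ω)) - ent p Y

/-- Mutual information `I(X;Y)`. -/
def mi {Ω : Type*} [Fintype Ω] {α β : Type*} [Fintype α] [DecidableEq α]
    [Fintype β] [DecidableEq β] (p : Ω → ℝ) (X : Ω → α) (Y : Ω → β) : ℝ :=
  ent p X + ent p Y - ent p (fun ω => (X ω, Y ω))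

/-- Conditional mutual information `I(X;Y|Z)`. -/
def cmi {Ω : Type*} [Fintype Ω] {α β γ : Type*} [Fintype α] [DecidableEq α]
    [Fintype β] [DecidableEq β] [Fintype γ] [DecidableEq γ]
    (p : Ω → ℝ) (X : Ω → α) (Y : Ω → β) (Z : Ω → γ) : ℝ :=
  ent p (fun ω => (X ω, Z ω)) + ent p (fun ω => (Y ω, Z ω))
    - ent p (fun ω => (X ω, Y ω, Z ω)) - ent p Z

/-- Residual information `RI(A;B)`: the infimum of `I(A;B | f(A))` over all pairs of
functions `(f,g)` such that `f(A) = g(B)` almost surely. -/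
def RI {Ω : Type*} [Fintype Ω] {α β : Type*} [Fintype α] [DecidableEq α]
    [Fintype β] [DecidableEq β] (p : Ω → ℝ) (A : Ω → α) (B : Ω → β) : ℝ :=
  sInf {r : ℝ | ∃ (f : α → α) (g : β → α),
    (∀ ω, p ω ≠ 0 → f (A ω) = g (B ω)) ∧ r = cmi p A B (fun ω => f (A ω))}

/-!
Split `H(M₂₃) = I(M₁₂;M₂₃) + I(M₃₁;M₂₃|M₁₂) + H(M₂₃|M₁₂,M₃₁)`. By correctness `X`, `Y`, `Z` are
functions of the messages their parties see, so by privacy the last term is at least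
`H(Y,Z|M₁₂,M₃₁,X) = H(Y,Z|X)`. By (iii) the first term is at least `I(M₁₂;M₂₃|M₃₁)`.

Privacy also makes `M₃₁` independent of `Z` given `X` and of `X` given `Z`. By the double Markov
property `X` and `Z` then have a common part `Q = f(X) = g(Z)` (the connected components of the
support of `(X,Z)`) given which `M₃₁` is independent of `X`, whence
`RI(X;Z) ≤ I(X;Z|Q) = I(X;Z|Q,M₃₁) ≤ I(X;Z|M₃₁) ≤ I(M₁₂;M₂₃|M₃₁)`.
With the parties permuted, the same argument gives `RI(X;Y) ≤ I(M₃₁;M₂₃|M₁₂)`.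

Nonnegativity of conditional mutual information, and its equality case (vanishing exactly under
conditional independence), come from Gibbs' inequality.
-/

open Finset

section Prob

variable {Ω α β γ : Type*} [Fintype Ω] [DecidableEq α] [DecidableEq β] [DecidableEq γ] {p : Ω → ℝ}

lemma prob_nonneg (hp : ∀ ω, 0 ≤ p ω) (X : Ω → α) (a : α) : 0 ≤ prob p X a :=
  sum_nonneg fun ω _ => by split_ifs <;> simp [hp ω]

lemma sum_prob_mul [Fintype α] (X : Ω → α) (g : α → ℝ) :
    ∑ a, prob p X a * g a = ∑ ω, p ω * g (X ω) := by
  simp only [prob, sum_mul, ite_mul, zero_mul]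
  rw [sum_comm]
  simp

lemma sum_prob [Fintype α] (hsum : ∑ ω, p ω = 1) (X : Ω → α) : ∑ a, prob p X a = 1 := by
  simpa [hsum] using sum_prob_mul (p := p) X fun _ => 1

lemma prob_comp (X : Ω → α) (f : α → β) [Fintype α] (b : β) :
    prob p (fun ω => f (X ω)) b = ∑ a, if f a = b then prob p X a else 0 := by
  simpa [mul_ite, prob] using (sum_prob_mul (p := p) X fun a => if f a = b then 1 else 0).symm

lemma exists_of_prob_ne_zero {X : Ω → α} {a : α} (h : prob p X a ≠ 0) :
    ∃ ω, p ω ≠ 0 ∧ X ω = a := by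
  obtain ⟨ω, -, hω⟩ := exists_ne_zero_of_sum_ne_zero h
  by_cases hX : X ω = a
  · exact ⟨ω, by simpa [hX] using hω, hX⟩
  · simp [hX] at hω

lemma prob_le_prob (hp : ∀ ω, 0 ≤ p ω) {X : Ω → α} {Y : Ω → β} {a : α} {b : β}
    (h : ∀ ω, X ω = a → Y ω = b) : prob p X a ≤ prob p Y b :=
  sum_le_sum fun ω _ => by
    by_cases hX : X ω = a
    · simp [hX, h ω hX]
    · split_ifs <;> simp [hp ω]

lemma prob_apply_ne_zero (hp : ∀ ω, 0 ≤ p ω) {ω : Ω} (hω : p ω ≠ 0) (X : Ω → α) :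
    prob p X (X ω) ≠ 0 := by
  have : p ω ≤ prob p X (X ω) := by
    simpa [prob] using single_le_sum (f := fun ω' => if X ω' = X ω then p ω' else 0)
      (fun ω' _ => by split_ifs <;> simp [hp ω']) (mem_univ ω)
  exact ((hp ω).lt_of_ne' hω |>.trans_le this).ne'

lemma prob_comp_of_injective {f : α → β} (hf : Function.Injective f) (X : Ω → α) (a : α) :
    prob p (fun ω => f (X ω)) (f a) = prob p X a := by
  simp only [prob, hf.eq_iff]

lemma prob_congr_ae {X X' : Ω → α} (h : ∀ ω, p ω ≠ 0 → X ω = X' ω) (a : α) :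
    prob p X a = prob p X' a :=
  sum_congr rfl fun ω _ => by
    by_cases hω : p ω = 0
    · simp [hω]
    · rw [h ω hω]

lemma prob_comp_of_ae_leftInverse {X : Ω → α} {u : α → β} {v : β → α}
    (hv : ∀ ω, p ω ≠ 0 → v (u (X ω)) = X ω) {a : α} (ha : prob p X a ≠ 0) :
    prob p (fun ω => u (X ω)) (u a) = prob p X a := by
  obtain ⟨ω₀, hω₀, rfl⟩ := exists_of_prob_ne_zero ha
  refine sum_congr rfl fun ω _ => ?_
  by_cases hω : p ω = 0
  · simp [hω]
  · have : u (X ω) = u (X ω₀) ↔ X ω = X ω₀ :=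
      ⟨fun h => by rw [← hv ω hω, h, hv ω₀ hω₀], congrArg u⟩
    simp only [this]

lemma sum_prob_pair_left [Fintype α] (X : Ω → α) (Y : Ω → β) (b : β) :
    ∑ a, prob p (fun ω => (X ω, Y ω)) (a, b) = prob p Y b := by
  simp only [prob, Prod.mk.injEq, ite_and]
  rw [sum_comm]
  simp

lemma sum_prob_triple_mid [Fintype β] (X : Ω → α) (Y : Ω → β) (Z : Ω → γ) (a : α) (c : γ) :
    ∑ b, prob p (fun ω => (X ω, Y ω, Z ω)) (a, b, c) = prob p (fun ω => (X ω, Z ω)) (a, c) := by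
  simp only [prob, Prod.mk.injEq, and_left_comm (a := X _ = a), ite_and]
  rw [sum_comm]
  simp

lemma exists_ne_zero_of_sum_eq_one (hsum : ∑ ω, p ω = 1) : ∃ ω, p ω ≠ 0 := by
  obtain ⟨ω, -, hω⟩ := exists_ne_zero_of_sum_ne_zero (hsum ▸ one_ne_zero : ∑ ω, p ω ≠ 0)
  exact ⟨ω, hω⟩

end Prob

section Entropy

variable {Ω α β : Type*} [Fintype Ω] [Fintype α] [DecidableEq α] [Fintype β] [DecidableEq β]
  {p : Ω → ℝ}

lemma ent_comp_eq_sum (X : Ω → α) (f : α → β) :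
    ent p (fun ω => f (X ω))
      = -∑ a, prob p X a * Real.logb 2 (prob p (fun ω => f (X ω)) (f a)) := by
  simp only [ent, sum_prob_mul]

lemma ent_congr_ae {X X' : Ω → α} (h : ∀ ω, p ω ≠ 0 → X ω = X' ω) : ent p X = ent p X' := by
  simp only [ent, prob_congr_ae h]

lemma ent_comp_of_ae_leftInverse {X : Ω → α} {u : α → β} {v : β → α}
    (hv : ∀ ω, p ω ≠ 0 → v (u (X ω)) = X ω) : ent p (fun ω => u (X ω)) = ent p X := by
  rw [ent_comp_eq_sum, ent]
  congr 1
  refine sum_congr rfl fun a _ => ?_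
  by_cases ha : prob p X a = 0
  · simp [ha]
  · rw [prob_comp_of_ae_leftInverse hv ha]

lemma ent_congr {X : Ω → α} {X' : Ω → β} {u : α → β} {v : β → α}
    (hu : ∀ ω, p ω ≠ 0 → u (X ω) = X' ω) (hv : ∀ ω, p ω ≠ 0 → v (X' ω) = X ω) :
    ent p X = ent p X' :=
  (ent_comp_of_ae_leftInverse (v := v) fun ω hω => by rw [hu ω hω, hv ω hω]).symm.trans
    (ent_congr_ae hu)

end Entropy

section Gibbs

lemma sub_le_mul_log_div {x y : ℝ} (hx : 0 < x) (hy : 0 < y) : x - y ≤ x * Real.log (x / y) := by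
  have h := mul_le_mul_of_nonneg_left (Real.log_le_sub_one_of_pos (div_pos hy hx)) hx.le
  rw [← inv_div, Real.log_inv]
  field_simp at h ⊢
  linarith

lemma sub_lt_mul_log_div {x y : ℝ} (hx : 0 < x) (hy : 0 < y) (hxy : x ≠ y) :
    x - y < x * Real.log (x / y) := by
  have hne : y / x ≠ 1 := fun h => hxy ((div_eq_one_iff_eq hx.ne').mp h).symm
  have h := mul_lt_mul_of_pos_left (Real.log_lt_sub_one_of_pos (div_pos hy hx) hne) hx
  rw [← inv_div, Real.log_inv]
  field_simp at h ⊢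
  linarith

variable {ι : Type*} {s : Finset ι} {P K : ι → ℝ}

lemma sum_mul_log_div_nonneg (hP : ∀ i ∈ s, 0 < P i) (hK : ∀ i ∈ s, 0 < K i)
    (hPK : ∑ i ∈ s, K i ≤ ∑ i ∈ s, P i) : 0 ≤ ∑ i ∈ s, P i * Real.log (P i / K i) :=
  calc 0 ≤ ∑ i ∈ s, (P i - K i) := by rw [sum_sub_distrib]; linarith
    _ ≤ _ := sum_le_sum fun i hi => sub_le_mul_log_div (hP i hi) (hK i hi)

lemma eq_of_sum_mul_log_div_eq_zero (hP : ∀ i ∈ s, 0 < P i) (hK : ∀ i ∈ s, 0 < K i)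
    (hPK : ∑ i ∈ s, K i ≤ ∑ i ∈ s, P i) (h : ∑ i ∈ s, P i * Real.log (P i / K i) = 0) :
    ∀ i ∈ s, P i = K i := by
  by_contra! ⟨i, hi, hne⟩
  have : ∑ i ∈ s, (P i - K i) < ∑ i ∈ s, P i * Real.log (P i / K i) :=
    sum_lt_sum (fun i hi => sub_le_mul_log_div (hP i hi) (hK i hi))
      ⟨i, hi, sub_lt_mul_log_div (hP i hi) (hK i hi) hne⟩
  rw [sum_sub_distrib] at this
  linarith

end Gibbs

section CondIndep

variable {Ω α β γ : Type*} [Fintype Ω] [DecidableEq α] [DecidableEq β] [DecidableEq γ]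
  {p : Ω → ℝ}

def CondIndep (p : Ω → ℝ) (U : Ω → α) (V : Ω → β) (W : Ω → γ) : Prop :=
  ∀ a b c, prob p (fun ω => (U ω, V ω, W ω)) (a, b, c) * prob p W c
    = prob p (fun ω => (U ω, W ω)) (a, c) * prob p (fun ω => (V ω, W ω)) (b, c)

/-- The mass `P(a,c) P(b,c) / P(c)` that `(U,V,W)` would give to `(a,b,c)` if `U` and `V` were
conditionally independent given `W`. -/
def condProdMass (p : Ω → ℝ) (U : Ω → α) (V : Ω → β) (W : Ω → γ) (t : α × β × γ) : ℝ :=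
  prob p (fun ω => (U ω, W ω)) (t.1, t.2.2) * prob p (fun ω => (V ω, W ω)) (t.2.1, t.2.2)
    / prob p W t.2.2

variable {U : Ω → α} {V : Ω → β} {W : Ω → γ}

lemma prob_triple_le_left (hp : ∀ ω, 0 ≤ p ω) (t : α × β × γ) :
    prob p (fun ω => (U ω, V ω, W ω)) t ≤ prob p (fun ω => (U ω, W ω)) (t.1, t.2.2) :=
  prob_le_prob hp fun ω h => by rw [← h]

lemma prob_triple_le_right (hp : ∀ ω, 0 ≤ p ω) (t : α × β × γ) :
    prob p (fun ω => (U ω, V ω, W ω)) t ≤ prob p (fun ω => (V ω, W ω)) (t.2.1, t.2.2) :=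
  prob_le_prob hp fun ω h => by rw [← h]

lemma prob_triple_le_cond (hp : ∀ ω, 0 ≤ p ω) (t : α × β × γ) :
    prob p (fun ω => (U ω, V ω, W ω)) t ≤ prob p W t.2.2 :=
  prob_le_prob hp fun ω h => by rw [← h]

lemma condProdMass_pos (hp : ∀ ω, 0 ≤ p ω) {t : α × β × γ}
    (ht : prob p (fun ω => (U ω, V ω, W ω)) t ≠ 0) : 0 < condProdMass p U V W t := by
  have h₀ := (prob_nonneg hp _ t).lt_of_ne' ht
  have := h₀.trans_le (prob_triple_le_left hp t)
  have := h₀.trans_le (prob_triple_le_right hp t)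
  have := h₀.trans_le (prob_triple_le_cond hp t)
  unfold condProdMass
  positivity

lemma condProdMass_nonneg (hp : ∀ ω, 0 ≤ p ω) (t : α × β × γ) : 0 ≤ condProdMass p U V W t :=
  div_nonneg (mul_nonneg (prob_nonneg hp _ _) (prob_nonneg hp _ _)) (prob_nonneg hp _ _)

lemma condIndep_comp_of_condLaw [Fintype α] {W : Ω → γ} {X : Ω → α} (f : α → β) (κ : β → γ → ℝ)
    (hκ : ∀ w x, prob p (fun ω => (W ω, X ω)) (w, x) = κ (f x) w * prob p X x) :
    CondIndep p W X (fun ω => f (X ω)) := by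
  intro w x q
  have htriple (x' : α) : prob p (fun ω => (W ω, X ω, f (X ω))) (w, x', q)
      = if f x' = q then prob p (fun ω => (W ω, X ω)) (w, x') else 0 := by
    simp only [prob, Prod.mk.injEq]
    split_ifs with h
    · exact sum_congr rfl fun ω _ => by by_cases hX : X ω = x' <;> simp [hX, h]
    · exact sum_eq_zero fun ω _ => if_neg fun ⟨_, hX, hq⟩ => h (hX ▸ hq)
  have hpair : prob p (fun ω => (X ω, f (X ω))) (x, q) = if f x = q then prob p X x else 0 := by
    simp only [prob, Prod.mk.injEq]
    split_ifs with h
    · exact sum_congr rfl fun ω _ => by by_cases hX : X ω = x <;> simp [hX, h]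
    · exact sum_eq_zero fun ω _ => if_neg fun ⟨hX, hq⟩ => h (hX ▸ hq)
  have hWQ : prob p (fun ω => (W ω, f (X ω))) (w, q) = κ q w * prob p (fun ω => f (X ω)) q := by
    rw [← sum_prob_triple_mid W X, prob_comp, mul_sum]
    refine sum_congr rfl fun x' _ => ?_
    rw [htriple]
    split_ifs with h
    · rw [hκ, h]
    · rw [mul_zero]
  rw [htriple, hpair, hWQ]
  split_ifs with h
  · rw [hκ, h]
    ring
  · simp

end CondIndep

section CondMutualInfo

variable {Ω α β γ : Type*} [Fintype Ω] [Fintype α] [DecidableEq α] [Fintype β] [DecidableEq β]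
  [Fintype γ] [DecidableEq γ] {p : Ω → ℝ}

variable {U : Ω → α} {V : Ω → β} {W : Ω → γ}

lemma cmi_eq_sum :
    cmi p U V W = ∑ t, prob p (fun ω => (U ω, V ω, W ω)) t *
      (Real.logb 2 (prob p (fun ω => (U ω, V ω, W ω)) t) + Real.logb 2 (prob p W t.2.2)
        - Real.logb 2 (prob p (fun ω => (U ω, W ω)) (t.1, t.2.2))
        - Real.logb 2 (prob p (fun ω => (V ω, W ω)) (t.2.1, t.2.2))) := by
  have e₁ : ent p (fun ω => (U ω, W ω)) = _ := ent_comp_eq_sum (fun ω => (U ω, V ω, W ω))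
    fun t => (t.1, t.2.2)
  have e₂ : ent p (fun ω => (V ω, W ω)) = _ := ent_comp_eq_sum (fun ω => (U ω, V ω, W ω))
    fun t => (t.2.1, t.2.2)
  have e₃ : ent p (fun ω => (U ω, V ω, W ω)) = _ := ent_comp_eq_sum (fun ω => (U ω, V ω, W ω)) id
  have e₄ : ent p W = _ := ent_comp_eq_sum (fun ω => (U ω, V ω, W ω)) fun t => t.2.2
  rw [cmi, e₁, e₂, e₃, e₄]
  simp only [mul_add, mul_sub, sum_add_distrib, sum_sub_distrib, id]
  ring

lemma sum_condProdMass_le_one (hsum : ∑ ω, p ω = 1) :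
    ∑ t, condProdMass p U V W t ≤ 1 :=
  calc ∑ t, condProdMass p U V W t
      = ∑ c, (∑ a, prob p (fun ω => (U ω, W ω)) (a, c))
          * (∑ b, prob p (fun ω => (V ω, W ω)) (b, c)) / prob p W c := by
        simp only [condProdMass, Fintype.sum_prod_type, sum_mul, mul_sum, sum_div]
        rw [sum_comm]
        exact (sum_congr rfl fun b _ => sum_comm).trans sum_comm
    _ = ∑ c, prob p W c * prob p W c / prob p W c := by simp only [sum_prob_pair_left]
    _ ≤ ∑ c, prob p W c := sum_le_sum fun c _ => by
        rcases eq_or_ne (prob p W c) 0 with h | h <;> simp [h]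
    _ = 1 := sum_prob hsum W

lemma cmi_mul_log_two_eq (hp : ∀ ω, 0 ≤ p ω) :
    cmi p U V W * Real.log 2 = ∑ t ∈ univ.filter (prob p (fun ω => (U ω, V ω, W ω)) · ≠ 0),
      prob p (fun ω => (U ω, V ω, W ω)) t *
        Real.log (prob p (fun ω => (U ω, V ω, W ω)) t / condProdMass p U V W t) := by
  rw [cmi_eq_sum, sum_mul, ← sum_filter_of_ne (p := (prob p (fun ω => (U ω, V ω, W ω)) · ≠ 0))
    fun t _ h h₀ => h (by simp [h₀])]
  refine sum_congr rfl fun t ht => ?_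
  have h₀ := (prob_nonneg hp _ t).lt_of_ne' (mem_filter.mp ht).2
  have hUW := h₀.trans_le (prob_triple_le_left hp t)
  have hVW := h₀.trans_le (prob_triple_le_right hp t)
  have hW := h₀.trans_le (prob_triple_le_cond hp t)
  simp only [Real.logb, condProdMass]
  rw [Real.log_div h₀.ne' (by positivity), Real.log_div (by positivity) hW.ne',
    Real.log_mul hUW.ne' hVW.ne']
  field_simp
  ring

lemma sum_condProdMass_le_sum_prob (hp : ∀ ω, 0 ≤ p ω) (hsum : ∑ ω, p ω = 1) :
    ∑ t ∈ univ.filter (prob p (fun ω => (U ω, V ω, W ω)) · ≠ 0), condProdMass p U V W t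
      ≤ ∑ t ∈ univ.filter (prob p (fun ω => (U ω, V ω, W ω)) · ≠ 0),
          prob p (fun ω => (U ω, V ω, W ω)) t :=
  calc _ ≤ ∑ t, condProdMass p U V W t :=
        sum_le_sum_of_subset_of_nonneg (filter_subset _ _) fun t _ _ => condProdMass_nonneg hp t
    _ ≤ 1 := sum_condProdMass_le_one hsum
    _ = _ := by rw [sum_filter_ne_zero, sum_prob hsum]

variable (U V W) in
theorem cmi_nonneg (hp : ∀ ω, 0 ≤ p ω) (hsum : ∑ ω, p ω = 1) : 0 ≤ cmi p U V W := by
  refine (mul_nonneg_iff_of_pos_right (Real.log_pos one_lt_two)).mp ?_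
  rw [cmi_mul_log_two_eq hp]
  exact sum_mul_log_div_nonneg (fun t ht => (prob_nonneg hp _ t).lt_of_ne' (mem_filter.mp ht).2)
    (fun t ht => condProdMass_pos hp (mem_filter.mp ht).2) (sum_condProdMass_le_sum_prob hp hsum)

theorem condIndep_of_cmi_eq_zero (hp : ∀ ω, 0 ≤ p ω) (hsum : ∑ ω, p ω = 1)
    (h : cmi p U V W = 0) : CondIndep p U V W := by
  have heq : ∀ t ∈ univ.filter (prob p (fun ω => (U ω, V ω, W ω)) · ≠ 0),
      prob p (fun ω => (U ω, V ω, W ω)) t = condProdMass p U V W t := eq_of_sum_mul_log_div_eq_zero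
    (fun t ht => (prob_nonneg hp _ t).lt_of_ne' (mem_filter.mp ht).2)
    (fun t ht => condProdMass_pos hp (mem_filter.mp ht).2) (sum_condProdMass_le_sum_prob hp hsum)
    (by rw [← cmi_mul_log_two_eq hp, h, zero_mul])
  have hsupp : ∀ t, prob p (fun ω => (U ω, V ω, W ω)) t ≠ 0 →
      prob p (fun ω => (U ω, V ω, W ω)) t * prob p W t.2.2
        = prob p (fun ω => (U ω, W ω)) (t.1, t.2.2)
          * prob p (fun ω => (V ω, W ω)) (t.2.1, t.2.2) := by
    intro t ht
    have hW := ((prob_nonneg hp _ t).lt_of_ne' ht).trans_le (prob_triple_le_cond hp t)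
    rw [heq t (by simpa using ht), condProdMass, div_mul_cancel₀ _ hW.ne']
  -- Off the support, summing over `b` shows that the right-hand side carries no mass either.
  intro a b c
  have hle : ∀ b, prob p (fun ω => (U ω, V ω, W ω)) (a, b, c) * prob p W c
      ≤ prob p (fun ω => (U ω, W ω)) (a, c) * prob p (fun ω => (V ω, W ω)) (b, c) := by
    intro b
    by_cases h₀ : prob p (fun ω => (U ω, V ω, W ω)) (a, b, c) = 0
    · rw [h₀, zero_mul]
      exact mul_nonneg (prob_nonneg hp _ _) (prob_nonneg hp _ _)
    · exact (hsupp _ h₀).le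
  have hsums : ∑ b, prob p (fun ω => (U ω, V ω, W ω)) (a, b, c) * prob p W c
      = ∑ b, prob p (fun ω => (U ω, W ω)) (a, c) * prob p (fun ω => (V ω, W ω)) (b, c) := by
    rw [← sum_mul, ← mul_sum, sum_prob_triple_mid, sum_prob_pair_left]
  exact (sum_eq_sum_iff_of_le fun b _ => hle b).mp hsums b (mem_univ b)

theorem CondIndep.cmi_eq_zero (hp : ∀ ω, 0 ≤ p ω) (h : CondIndep p U V W) : cmi p U V W = 0 := by
  have : cmi p U V W * Real.log 2 = 0 := by
    rw [cmi_mul_log_two_eq hp]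
    refine sum_eq_zero fun t ht => ?_
    have h₀ := (prob_nonneg hp _ t).lt_of_ne' (mem_filter.mp ht).2
    have hW := h₀.trans_le (prob_triple_le_cond hp t)
    rw [condProdMass, ← h, mul_div_cancel_right₀ _ hW.ne', div_self h₀.ne', Real.log_one, mul_zero]
  exact (mul_eq_zero.mp this).resolve_right (Real.log_pos one_lt_two).ne'

end CondMutualInfo

section CondMutualInfoAlgebra

variable {Ω α β γ δ ε : Type*} [Fintype Ω] [Fintype α] [DecidableEq α] [Fintype β]
  [DecidableEq β] [Fintype γ] [DecidableEq γ] [Fintype δ] [DecidableEq δ] [Fintype ε]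
  [DecidableEq ε] {p : Ω → ℝ}

lemma cmi_comm (U : Ω → α) (V : Ω → β) (W : Ω → γ) : cmi p U V W = cmi p V U W := by
  have : ent p (fun ω => (U ω, V ω, W ω)) = ent p (fun ω => (V ω, U ω, W ω)) :=
    ent_congr (u := fun t => (t.2.1, t.1, t.2.2)) (v := fun t => (t.2.1, t.1, t.2.2))
      (fun _ _ => rfl) (fun _ _ => rfl)
  rw [cmi, cmi, this]
  ring

lemma cmi_congr_left {U : Ω → α} {U' : Ω → β} (V : Ω → γ) (W : Ω → δ) {u : α → β} {v : β → α}
    (hu : ∀ ω, p ω ≠ 0 → u (U ω) = U' ω) (hv : ∀ ω, p ω ≠ 0 → v (U' ω) = U ω) :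
    cmi p U V W = cmi p U' V W := by
  have e₁ : ent p (fun ω => (U ω, W ω)) = ent p (fun ω => (U' ω, W ω)) :=
    ent_congr (u := fun t => (u t.1, t.2)) (v := fun t => (v t.1, t.2))
      (fun ω hω => by rw [hu ω hω]) (fun ω hω => by rw [hv ω hω])
  have e₂ : ent p (fun ω => (U ω, V ω, W ω)) = ent p (fun ω => (U' ω, V ω, W ω)) :=
    ent_congr (u := fun t => (u t.1, t.2)) (v := fun t => (v t.1, t.2))
      (fun ω hω => by rw [hu ω hω]) (fun ω hω => by rw [hv ω hω])
  rw [cmi, cmi, e₁, e₂]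

lemma cmi_congr_cond (U : Ω → α) (V : Ω → β) {W : Ω → γ} {W' : Ω → δ} {u : γ → δ} {v : δ → γ}
    (hu : ∀ ω, p ω ≠ 0 → u (W ω) = W' ω) (hv : ∀ ω, p ω ≠ 0 → v (W' ω) = W ω) :
    cmi p U V W = cmi p U V W' := by
  have e₁ : ent p (fun ω => (U ω, W ω)) = ent p (fun ω => (U ω, W' ω)) :=
    ent_congr (u := fun t => (t.1, u t.2)) (v := fun t => (t.1, v t.2))
      (fun ω hω => by rw [hu ω hω]) (fun ω hω => by rw [hv ω hω])
  have e₂ : ent p (fun ω => (V ω, W ω)) = ent p (fun ω => (V ω, W' ω)) :=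
    ent_congr (u := fun t => (t.1, u t.2)) (v := fun t => (t.1, v t.2))
      (fun ω hω => by rw [hu ω hω]) (fun ω hω => by rw [hv ω hω])
  have e₃ : ent p (fun ω => (U ω, V ω, W ω)) = ent p (fun ω => (U ω, V ω, W' ω)) :=
    ent_congr (u := fun t => (t.1, t.2.1, u t.2.2)) (v := fun t => (t.1, t.2.1, v t.2.2))
      (fun ω hω => by rw [hu ω hω]) (fun ω hω => by rw [hv ω hω])
  rw [cmi, cmi, e₁, e₂, e₃, ent_congr hu hv]

lemma cmi_pair_left (R : Ω → α) (S : Ω → β) (V : Ω → γ) (W : Ω → δ) :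
    cmi p (fun ω => (R ω, S ω)) V W = cmi p R V W + cmi p S V (fun ω => (R ω, W ω)) := by
  have e₁ : ent p (fun ω => ((R ω, S ω), W ω)) = ent p (fun ω => (S ω, R ω, W ω)) :=
    ent_congr (u := fun t => (t.1.2, t.1.1, t.2)) (v := fun t => ((t.2.1, t.1), t.2.2))
      (fun _ _ => rfl) (fun _ _ => rfl)
  have e₂ : ent p (fun ω => ((R ω, S ω), V ω, W ω)) = ent p (fun ω => (S ω, V ω, R ω, W ω)) :=
    ent_congr (u := fun t => (t.1.2, t.2.1, t.1.1, t.2.2))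
      (v := fun t => ((t.2.2.1, t.1), t.2.1, t.2.2.2)) (fun _ _ => rfl) (fun _ _ => rfl)
  have e₃ : ent p (fun ω => (V ω, R ω, W ω)) = ent p (fun ω => (R ω, V ω, W ω)) :=
    ent_congr (u := fun t => (t.2.1, t.1, t.2.2)) (v := fun t => (t.2.1, t.1, t.2.2))
      (fun _ _ => rfl) (fun _ _ => rfl)
  rw [cmi, cmi, cmi, e₁, e₂, e₃]
  ring

lemma cmi_left_eq_add_of_ae_eq {A : Ω → α} {B : Ω → β} (V : Ω → γ) (W : Ω → δ)
    {φ : β × δ → α} (hA : ∀ ω, p ω ≠ 0 → A ω = φ (B ω, W ω)) :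
    cmi p B V W = cmi p A V W + cmi p B V (fun ω => (A ω, W ω)) := by
  have e₁ : ent p (fun ω => (B ω, W ω)) = ent p (fun ω => ((A ω, B ω), W ω)) :=
    ent_congr (u := fun t => ((φ t, t.1), t.2)) (v := fun t => (t.1.2, t.2))
      (fun ω hω => by rw [hA ω hω]) (fun _ _ => rfl)
  have e₂ : ent p (fun ω => (B ω, V ω, W ω)) = ent p (fun ω => ((A ω, B ω), V ω, W ω)) :=
    ent_congr (u := fun t => ((φ (t.1, t.2.2), t.1), t.2)) (v := fun t => (t.1.2, t.2))
      (fun ω hω => by rw [hA ω hω]) (fun _ _ => rfl)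
  rw [← cmi_pair_left, cmi, cmi, e₁, e₂]

lemma cmi_right_eq_add_of_ae_eq (U : Ω → α) {A : Ω → β} {B : Ω → γ} (W : Ω → δ)
    {φ : γ × δ → β} (hA : ∀ ω, p ω ≠ 0 → A ω = φ (B ω, W ω)) :
    cmi p U B W = cmi p U A W + cmi p U B (fun ω => (A ω, W ω)) := by
  rw [cmi_comm, cmi_left_eq_add_of_ae_eq U W hA, cmi_comm, cmi_comm B]

lemma cmi_le_cmi_of_ae_eq_left (hp : ∀ ω, 0 ≤ p ω) (hsum : ∑ ω, p ω = 1) {A : Ω → α}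
    {B : Ω → β} (V : Ω → γ) (W : Ω → δ) {φ : β × δ → α}
    (hA : ∀ ω, p ω ≠ 0 → A ω = φ (B ω, W ω)) : cmi p A V W ≤ cmi p B V W := by
  rw [cmi_left_eq_add_of_ae_eq V W hA]
  linarith [cmi_nonneg B V (fun ω => (A ω, W ω)) hp hsum]

lemma cmi_le_cmi_of_ae_eq_right (hp : ∀ ω, 0 ≤ p ω) (hsum : ∑ ω, p ω = 1) (U : Ω → α)
    {A : Ω → β} {B : Ω → γ} (W : Ω → δ) {φ : γ × δ → β}
    (hA : ∀ ω, p ω ≠ 0 → A ω = φ (B ω, W ω)) : cmi p U A W ≤ cmi p U B W := by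
  rw [cmi_comm U, cmi_comm U]
  exact cmi_le_cmi_of_ae_eq_left hp hsum U W hA

lemma cmi_comp_eq_zero (hp : ∀ ω, 0 ≤ p ω) (hsum : ∑ ω, p ω = 1) {U : Ω → α} {V : Ω → β}
    {W : Ω → γ} (h : cmi p U V W = 0) (f : α → δ) (g : β → ε) :
    cmi p (fun ω => f (U ω)) (fun ω => g (V ω)) W = 0 := by
  refine le_antisymm ?_ (cmi_nonneg _ _ _ hp hsum)
  calc _ ≤ cmi p U (fun ω => g (V ω)) W :=
        cmi_le_cmi_of_ae_eq_left hp hsum _ W (φ := fun t => f t.1) fun _ _ => rfl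
    _ ≤ cmi p U V W := cmi_le_cmi_of_ae_eq_right hp hsum U W (φ := fun t => g t.1) fun _ _ => rfl
    _ = 0 := h

end CondMutualInfoAlgebra

section CondEntropy

variable {Ω α β γ : Type*} [Fintype Ω] [Fintype α] [DecidableEq α] [Fintype β]
  [DecidableEq β] [Fintype γ] [DecidableEq γ] {p : Ω → ℝ}

lemma condEnt_eq_cmi (X : Ω → α) (Y : Ω → β) : condEnt p X Y = cmi p X X Y := by
  have : ent p (fun ω => (X ω, X ω, Y ω)) = ent p (fun ω => (X ω, Y ω)) :=
    ent_congr (u := fun t => (t.1, t.2.2)) (v := fun t => (t.1, t)) (fun _ _ => rfl)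
      (fun _ _ => rfl)
  rw [condEnt, cmi, this]
  ring

lemma condEnt_congr_right (X : Ω → α) {Y : Ω → β} {Y' : Ω → γ} {u : β → γ} {v : γ → β}
    (hu : ∀ ω, p ω ≠ 0 → u (Y ω) = Y' ω) (hv : ∀ ω, p ω ≠ 0 → v (Y' ω) = Y ω) :
    condEnt p X Y = condEnt p X Y' := by
  rw [condEnt_eq_cmi, condEnt_eq_cmi, cmi_congr_cond X X hu hv]

lemma condEnt_le_condEnt_of_ae_eq (hp : ∀ ω, 0 ≤ p ω) (hsum : ∑ ω, p ω = 1) {U : Ω → α}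
    {V : Ω → β} (W : Ω → γ) {ψ : α × γ → β} (hV : ∀ ω, p ω ≠ 0 → V ω = ψ (U ω, W ω)) :
    condEnt p V W ≤ condEnt p U W := by
  rw [condEnt_eq_cmi, condEnt_eq_cmi]
  exact (cmi_le_cmi_of_ae_eq_left hp hsum V W hV).trans
    (cmi_le_cmi_of_ae_eq_right hp hsum U W hV)

lemma cmi_eq_condEnt_sub (A : Ω → α) (C : Ω → β) (B : Ω → γ) :
    cmi p A C B = condEnt p A B - condEnt p A (fun ω => (C ω, B ω)) := by
  rw [cmi, condEnt, condEnt]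
  ring

lemma ent_eq_mi_add_condEnt (A : Ω → α) (B : Ω → β) : ent p A = mi p A B + condEnt p A B := by
  rw [mi, condEnt]
  ring

lemma mi_comm (A : Ω → α) (B : Ω → β) : mi p A B = mi p B A := by
  have : ent p (fun ω => (A ω, B ω)) = ent p (fun ω => (B ω, A ω)) :=
    ent_congr (u := Prod.swap) (v := Prod.swap) (fun _ _ => rfl) (fun _ _ => rfl)
  rw [mi, mi, this]
  ring

lemma mi_pair_right (A : Ω → α) (B : Ω → β) (C : Ω → γ) :
    mi p A (fun ω => (B ω, C ω)) = mi p A B + cmi p A C B := by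
  have e₁ : ent p (fun ω => (B ω, C ω)) = ent p (fun ω => (C ω, B ω)) :=
    ent_congr (u := Prod.swap) (v := Prod.swap) (fun _ _ => rfl) (fun _ _ => rfl)
  have e₂ : ent p (fun ω => (A ω, B ω, C ω)) = ent p (fun ω => (A ω, C ω, B ω)) :=
    ent_congr (u := fun t => (t.1, t.2.2, t.2.1)) (v := fun t => (t.1, t.2.2, t.2.1))
      (fun _ _ => rfl) (fun _ _ => rfl)
  rw [mi, mi, cmi, e₁, e₂]
  ring

lemma exists_ae_eq_comp_of_condEnt_eq_zero (hp : ∀ ω, 0 ≤ p ω) (hsum : ∑ ω, p ω = 1)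
    {X : Ω → α} {Y : Ω → β} (h : condEnt p X Y = 0) :
    ∃ φ : β → α, ∀ ω, p ω ≠ 0 → X ω = φ (Y ω) := by
  have hci := condIndep_of_cmi_eq_zero hp hsum (condEnt_eq_cmi X Y ▸ h)
  have hdiag (a : α) (c : β) :
      prob p (fun ω => (X ω, X ω, Y ω)) (a, a, c) = prob p (fun ω => (X ω, Y ω)) (a, c) :=
    prob_comp_of_injective (f := fun t : α × β => (t.1, t.1, t.2))
      (fun s t h => by simpa [Prod.ext_iff] using h) (fun ω => (X ω, Y ω)) (a, c)
  have hsupp (a : α) (c : β) (hac : prob p (fun ω => (X ω, Y ω)) (a, c) ≠ 0) :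
      prob p (fun ω => (X ω, Y ω)) (a, c) = prob p Y c := by
    have := hci a a c
    rw [hdiag] at this
    exact (mul_left_cancel₀ hac this).symm
  have huniq (a a' : α) (c : β) (hac : prob p (fun ω => (X ω, Y ω)) (a, c) ≠ 0)
      (ha'c : prob p (fun ω => (X ω, Y ω)) (a', c) ≠ 0) : a = a' := by
    by_contra hne
    have hle : prob p (fun ω => (X ω, Y ω)) (a, c) + prob p (fun ω => (X ω, Y ω)) (a', c)
        ≤ prob p Y c := by
      rw [← sum_pair (f := fun x => prob p (fun ω => (X ω, Y ω)) (x, c)) hne,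
        ← sum_prob_pair_left X Y c]
      exact sum_le_sum_of_subset_of_nonneg (subset_univ _) fun _ _ _ => prob_nonneg hp _ _
    rw [hsupp a c hac, hsupp a' c ha'c] at hle
    have := (prob_nonneg hp _ _).lt_of_ne' hac
    rw [hsupp a c hac] at this
    linarith
  obtain ⟨ω₀, -⟩ := exists_ne_zero_of_sum_eq_one hsum
  have : Nonempty α := ⟨X ω₀⟩
  refine ⟨fun c => Classical.epsilon fun a => prob p (fun ω => (X ω, Y ω)) (a, c) ≠ 0,
    fun ω hω => ?_⟩
  have hω' := prob_apply_ne_zero hp hω fun ω => (X ω, Y ω)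
  exact huniq _ _ _ hω'
    (Classical.epsilon_spec (p := fun a => prob p (fun ω => (X ω, Y ω)) (a, Y ω) ≠ 0) ⟨X ω, hω'⟩)

end CondEntropy

lemma exists_common_part {α γ : Type*} [Nonempty α] (S : α → γ → Prop) :
    ∃ (f : α → α) (g : γ → α), (∀ x z, S x z → f x = g z) ∧
      ∀ x, Relation.EqvGen (fun x x' => ∃ z, S x z ∧ S x' z) x (f x) := by
  let f : α → α := fun x => (Quot.mk (fun x x' => ∃ z, S x z ∧ S x' z) x).out
  refine ⟨f, fun z => f (Classical.epsilon (S · z)), fun x z hxz => ?_, fun x => ?_⟩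
  · exact congrArg Quot.out (Quot.sound ⟨z, hxz, Classical.epsilon_spec (p := (S · z)) ⟨x, hxz⟩⟩)
  · exact Quot.eqvGen_exact (Quot.out_eq _).symm

section CommonPart

variable {Ω α γ δ : Type*} [Fintype Ω] [Fintype α] [DecidableEq α] [Fintype γ] [DecidableEq γ]
  [Fintype δ] [DecidableEq δ] {p : Ω → ℝ}

lemma condProb_eq_of_cmi_eq_zero (hp : ∀ ω, 0 ≤ p ω) (hsum : ∑ ω, p ω = 1) {X : Ω → α}
    {Z : Ω → γ} {W : Ω → δ} (h₁ : cmi p W Z X = 0) (h₂ : cmi p W X Z = 0) {x : α} {z : γ}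
    (hxz : prob p (fun ω => (X ω, Z ω)) (x, z) ≠ 0) (w : δ) :
    prob p (fun ω => (W ω, X ω)) (w, x) / prob p X x
      = prob p (fun ω => (W ω, Z ω)) (w, z) / prob p Z z := by
  have hx := ((prob_nonneg hp _ _).lt_of_ne' hxz).trans_le
    (prob_le_prob hp (Y := X) (b := x) fun ω h => congrArg Prod.fst h)
  have hz := ((prob_nonneg hp _ _).lt_of_ne' hxz).trans_le
    (prob_le_prob hp (Y := Z) (b := z) fun ω h => congrArg Prod.snd h)
  have h₁' := condIndep_of_cmi_eq_zero hp hsum h₁ w z x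
  have h₂' := condIndep_of_cmi_eq_zero hp hsum h₂ w x z
  have e₁ : prob p (fun ω => (W ω, Z ω, X ω)) (w, z, x)
      = prob p (fun ω => (W ω, X ω, Z ω)) (w, x, z) :=
    prob_comp_of_injective (f := fun t : δ × α × γ => (t.1, t.2.2, t.2.1))
      (fun s t h => by simpa [Prod.ext_iff, and_comm] using h) (fun ω => (W ω, X ω, Z ω)) (w, x, z)
  have e₂ : prob p (fun ω => (Z ω, X ω)) (z, x) = prob p (fun ω => (X ω, Z ω)) (x, z) :=
    prob_comp_of_injective Prod.swap_injective (fun ω => (X ω, Z ω)) (x, z)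
  rw [e₁, e₂] at h₁'
  rw [div_eq_div_iff hx.ne' hz.ne']
  refine mul_left_cancel₀ hxz ?_
  linear_combination -prob p Z z * h₁' + prob p X x * h₂'

theorem exists_common_part_of_cmi_eq_zero (hp : ∀ ω, 0 ≤ p ω) (hsum : ∑ ω, p ω = 1)
    {X : Ω → α} {Z : Ω → γ} {W : Ω → δ} (h₁ : cmi p W Z X = 0) (h₂ : cmi p W X Z = 0) :
    ∃ (f : α → α) (g : γ → α), (∀ ω, p ω ≠ 0 → f (X ω) = g (Z ω)) ∧
      cmi p W X (fun ω => f (X ω)) = 0 := by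
  obtain ⟨ω₀, -⟩ := exists_ne_zero_of_sum_eq_one hsum
  have : Nonempty α := ⟨X ω₀⟩
  obtain ⟨f, g, hfg, hf⟩ := exists_common_part fun x z => prob p (fun ω => (X ω, Z ω)) (x, z) ≠ 0
  let κ : α → δ → ℝ := fun x w => prob p (fun ω => (W ω, X ω)) (w, x) / prob p X x
  have hκ (x : α) : κ x = κ (f x) := by
    refine congrArg (Quot.lift κ ?_) (Quot.eqvGen_sound (hf x))
    rintro x x' ⟨z, hxz, hx'z⟩
    funext w
    exact (condProb_eq_of_cmi_eq_zero hp hsum h₁ h₂ hxz w).trans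
      (condProb_eq_of_cmi_eq_zero hp hsum h₁ h₂ hx'z w).symm
  refine ⟨f, g, fun ω hω => hfg _ _ (prob_apply_ne_zero hp hω _),
    (condIndep_comp_of_condLaw f κ fun w x => ?_).cmi_eq_zero hp⟩
  rw [← hκ]
  by_cases hx : prob p X x = 0
  · have := (prob_le_prob hp (X := fun ω => (W ω, X ω)) (a := (w, x)) (b := x)
      fun ω h => congrArg Prod.snd h).trans_eq hx
    rw [hx, mul_zero]
    exact le_antisymm this (prob_nonneg hp _ _)
  · exact (div_mul_cancel₀ _ hx).symm

end CommonPart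

section ResidualInformation

variable {Ω α β γ μ ν ρ : Type*} [Fintype Ω] [Fintype α] [DecidableEq α] [Fintype β]
  [DecidableEq β] [Fintype γ] [DecidableEq γ] [Fintype μ] [DecidableEq μ] [Fintype ν]
  [DecidableEq ν] [Fintype ρ] [DecidableEq ρ] {p : Ω → ℝ}

lemma RI_le_cmi (hp : ∀ ω, 0 ≤ p ω) (hsum : ∑ ω, p ω = 1) {A : Ω → α} {B : Ω → β}
    {f : α → α} {g : β → α} (hfg : ∀ ω, p ω ≠ 0 → f (A ω) = g (B ω)) :
    RI p A B ≤ cmi p A B (fun ω => f (A ω)) :=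
  csInf_le ⟨0, by rintro r ⟨f, g, -, rfl⟩; exact cmi_nonneg _ _ _ hp hsum⟩ ⟨f, g, hfg, rfl⟩

/-- The data processing inequality for residual information of Wolf and Wullschleger. -/
theorem RI_le_cmi_of_markov (hp : ∀ ω, 0 ≤ p ω) (hsum : ∑ ω, p ω = 1) {U : Ω → μ} {V : Ω → ν}
    {W : Ω → ρ} {X : Ω → α} {Z : Ω → γ} {φ : μ × ρ → α} {ψ : ν × ρ → γ}
    (hX : ∀ ω, p ω ≠ 0 → X ω = φ (U ω, W ω)) (hZ : ∀ ω, p ω ≠ 0 → Z ω = ψ (V ω, W ω))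
    (h₁ : cmi p W Z X = 0) (h₂ : cmi p W X Z = 0) : RI p X Z ≤ cmi p U V W := by
  obtain ⟨f, g, hfg, hWXQ⟩ := exists_common_part_of_cmi_eq_zero hp hsum h₁ h₂
  set Q : Ω → α := fun ω => f (X ω)
  have hWXZQ : cmi p W X (fun ω => (Z ω, Q ω)) = 0 := by
    rw [← h₂]
    exact cmi_congr_cond W X (u := fun t => t.1) (v := fun z => (z, g z)) (fun _ _ => rfl)
      fun ω hω => by simp [Q, hfg ω hω]
  -- `W` carries no information on `X` given `Q`, with or without `Z`
  have hdrop : cmi p Z X Q = cmi p Z X (fun ω => (W ω, Q ω)) := by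
    have e₁ := cmi_pair_left (p := p) W Z X Q
    have e₂ := cmi_pair_left (p := p) Z W X Q
    have e₃ : cmi p (fun ω => (W ω, Z ω)) X Q = cmi p (fun ω => (Z ω, W ω)) X Q :=
      cmi_congr_left X Q (u := Prod.swap) (v := Prod.swap) (fun _ _ => rfl) (fun _ _ => rfl)
    linarith
  calc RI p X Z ≤ cmi p X Z Q := RI_le_cmi hp hsum hfg
    _ = cmi p Z X (fun ω => (W ω, Q ω)) := by rw [cmi_comm, hdrop]
    _ = cmi p Z X (fun ω => (Q ω, W ω)) :=
        cmi_congr_cond Z X (u := Prod.swap) (v := Prod.swap) (fun _ _ => rfl) (fun _ _ => rfl)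
    _ ≤ cmi p Z X W := by
        have := cmi_right_eq_add_of_ae_eq (p := p) Z (A := Q) W (φ := fun t => f t.1)
          fun _ _ => rfl
        linarith [cmi_nonneg Z Q W hp hsum]
    _ ≤ cmi p Z U W := cmi_le_cmi_of_ae_eq_right hp hsum Z W hX
    _ ≤ cmi p V U W := cmi_le_cmi_of_ae_eq_left hp hsum U W hZ
    _ = cmi p U V W := cmi_comm V U W

end ResidualInformation

theorem stmt19 {Ω : Type*} [Fintype Ω] {α β γ μ ν ρ : Type*}
    [Fintype α] [DecidableEq α] [Fintype β] [DecidableEq β] [Fintype γ] [DecidableEq γ]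
    [Fintype μ] [DecidableEq μ] [Fintype ν] [DecidableEq ν] [Fintype ρ] [DecidableEq ρ]
    (p : Ω → ℝ) (hp : ∀ ω, 0 ≤ p ω) (hsum : ∑ ω, p ω = 1)
    (X : Ω → α) (Y : Ω → β) (Z : Ω → γ)
    (M12 : Ω → μ) (M23 : Ω → ν) (M31 : Ω → ρ)
    (hcorX : condEnt p X (fun ω => (M12 ω, M31 ω)) = 0)
    (hcorY : condEnt p Y (fun ω => (M12 ω, M23 ω)) = 0)
    (hcorZ : condEnt p Z (fun ω => (M23 ω, M31 ω)) = 0)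
    (hprivA : cmi p (fun ω => (M12 ω, M31 ω)) (fun ω => (Y ω, Z ω)) X = 0)
    (hprivB : cmi p (fun ω => (M12 ω, M23 ω)) (fun ω => (X ω, Z ω)) Y = 0)
    (hprivC : cmi p (fun ω => (M23 ω, M31 ω)) (fun ω => (X ω, Y ω)) Z = 0)
    (hInfoIneq : mi p M12 M23 ≥ cmi p M12 M23 M31) :
    ent p M23 ≥ RI p X Z + RI p X Y + condEnt p (fun ω => (Y ω, Z ω)) X := by
  obtain ⟨φX, hφX⟩ := exists_ae_eq_comp_of_condEnt_eq_zero hp hsum hcorX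
  obtain ⟨φY, hφY⟩ := exists_ae_eq_comp_of_condEnt_eq_zero hp hsum hcorY
  obtain ⟨φZ, hφZ⟩ := exists_ae_eq_comp_of_condEnt_eq_zero hp hsum hcorZ
  have hXZ : RI p X Z ≤ cmi p M12 M23 M31 :=
    RI_le_cmi_of_markov hp hsum hφX hφZ (cmi_comp_eq_zero hp hsum hprivA Prod.snd Prod.snd)
      (cmi_comp_eq_zero hp hsum hprivC Prod.snd Prod.fst)
  have hXY : RI p X Y ≤ cmi p M31 M23 M12 :=
    RI_le_cmi_of_markov hp hsum (φ := fun t => φX (t.2, t.1)) (ψ := fun t => φY (t.2, t.1))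
      hφX hφY (cmi_comp_eq_zero hp hsum hprivA Prod.fst Prod.fst)
      (cmi_comp_eq_zero hp hsum hprivB Prod.fst Prod.fst)
  have hYZ : condEnt p (fun ω => (Y ω, Z ω)) X ≤ condEnt p M23 (fun ω => (M12 ω, M31 ω)) :=
    calc condEnt p (fun ω => (Y ω, Z ω)) X
        = condEnt p (fun ω => (Y ω, Z ω)) (fun ω => ((M12 ω, M31 ω), X ω)) := by
          have := cmi_eq_condEnt_sub (p := p) (fun ω => (Y ω, Z ω)) (fun ω => (M12 ω, M31 ω)) X
          rw [cmi_comm, hprivA] at this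
          linarith
      _ ≤ condEnt p M23 (fun ω => ((M12 ω, M31 ω), X ω)) :=
          condEnt_le_condEnt_of_ae_eq hp hsum _
            (ψ := fun t => (φY (t.2.1.1, t.1), φZ (t.1, t.2.1.2)))
            fun ω hω => by rw [hφY ω hω, hφZ ω hω]
      _ = condEnt p M23 (fun ω => (M12 ω, M31 ω)) :=
          condEnt_congr_right M23 (u := fun t => t.1) (v := fun t => (t, φX t)) (fun _ _ => rfl)
            fun ω hω => by rw [hφX ω hω]
  rw [ent_eq_mi_add_condEnt M23 (fun ω => (M12 ω, M31 ω)), mi_pair_right, mi_comm, cmi_comm M23]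
  linarith
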